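/- arXiv:1106.0783 — 2 statements merged into one kernel-verified Lean document; each statement's English description precedes it below -/
import Mathlib

section
/- Let X_1,...,X_L be independent real random variables with E[X_i] = 0 and |X_i| ≤ M for all i, and let S_ℓ := X_1 + ... + X_ℓ. Then for every t > 0, P[max_{1 ≤ ℓ ≤ L} |S_ℓ| > t] ≤ 2·exp(−(t²/2)/(Σ_{i=1}^L E[X_i²] + Mt/3)). -/
/-!
For `λ ≥ 0` the process `exp (λ S_n)` is a nonnegative submartingale: by independence
`E[exp (λ S_{n+1}) | F_n] = exp (λ S_n) E[exp (λ X_{n+1})]`, and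
`E[exp (λ X)] ≥ exp (λ E[X]) = 1`. Doob's maximal inequality
therefore bounds `P[max_ℓ S_ℓ > t]` by `exp (-λ t) ∏ E[exp (λ X_i)]`. Comparing the exponential
series with a geometric one, via `(n + 2)! ≥ 2 * 3 ^ n`, gives
`E[exp (λ X)] ≤ exp (λ² E[X²] / (2 (1 - λ M / 3)))`, and `λ = t / (V + M t / 3)` turns the
product into Bernstein's bound. The two-sided estimate follows by applying this to `X` and `-X`.
-/

open MeasureTheory ProbabilityTheory Filter
open Real Finset
open scoped Nat

theorem Real.exp_le_one_add_add_sq_div {y : ℝ} (hy : |y| < 3) :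
    exp y ≤ 1 + y + y ^ 2 / (2 * (1 - |y| / 3)) := by
  have hq : |y| / 3 < 1 := by linarith
  have hq0 : 0 ≤ |y| / 3 := by positivity
  have hsum := Real.summable_pow_div_factorial y
  have htail (n : ℕ) : y ^ (n + 2) / (n + 2)! ≤ y ^ 2 / 2 * (|y| / 3) ^ n := by
    have hfac : (2 * 3 ^ n : ℝ) ≤ (n + 2)! := by
      rw [add_comm n]; exact_mod_cast Nat.factorial_mul_pow_le_factorial (m := 2) (n := n)
    calc y ^ (n + 2) / (n + 2)! ≤ |y| ^ (n + 2) / (2 * 3 ^ n) :=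
          div_le_div₀ (by positivity) ((le_abs_self _).trans (abs_pow y _).le) (by positivity)
            hfac
      _ = y ^ 2 / 2 * (|y| / 3) ^ n := by rw [pow_add, sq_abs, div_pow]; ring
  calc exp y = ∑ n ∈ range 2, y ^ n / n ! + ∑' n : ℕ, y ^ (n + 2) / (n + 2)! := by
        rw [exp_eq_exp_ℝ, NormedSpace.exp_eq_tsum_div, hsum.sum_add_tsum_nat_add 2]
    _ ≤ ∑ n ∈ range 2, y ^ n / n ! + ∑' n : ℕ, y ^ 2 / 2 * (|y| / 3) ^ n := by
        refine add_le_add_right ?_ _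
        exact ((summable_nat_add_iff 2).2 hsum).tsum_le_tsum htail
          ((summable_geometric_of_lt_one hq0 hq).mul_left _)
    _ = 1 + y + y ^ 2 / (2 * (1 - |y| / 3)) := by
        rw [tsum_mul_left, tsum_geometric_of_lt_one hq0 hq]
        simp [Finset.sum_range_succ]
        field_simp

theorem Real.exp_mul_le_of_abs_le {l M x : ℝ} (hl : 0 ≤ l) (hx : |x| ≤ M) (hlM : l * M < 3) :
    exp (l * x) ≤ 1 + l * x + l ^ 2 / (2 * (1 - l * M / 3)) * x ^ 2 := by
  have hlx : |l * x| ≤ l * M := by rw [abs_mul, abs_of_nonneg hl]; gcongr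
  calc exp (l * x) ≤ 1 + l * x + (l * x) ^ 2 / (2 * (1 - |l * x| / 3)) :=
        exp_le_one_add_add_sq_div (by linarith)
    _ ≤ 1 + l * x + (l * x) ^ 2 / (2 * (1 - l * M / 3)) := by
        gcongr
        linarith
    _ = 1 + l * x + l ^ 2 / (2 * (1 - l * M / 3)) * x ^ 2 := by ring

section Moments

variable {Ω : Type*} [MeasurableSpace Ω] {μ : Measure Ω} {X : Ω → ℝ} {M l : ℝ}

theorem integrable_exp_mul_of_abs_le [IsFiniteMeasure μ] (hX : AEMeasurable X μ)
    (hbdd : ∀ᵐ ω ∂μ, |X ω| ≤ M) (l : ℝ) :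
    Integrable (fun ω => exp (l * X ω)) μ := by
  refine .of_bound (by fun_prop) (exp (|l| * M)) ?_
  filter_upwards [hbdd] with ω hω
  rw [norm_eq_abs, abs_exp, exp_le_exp]
  calc l * X ω ≤ |l * X ω| := le_abs_self _
    _ ≤ |l| * M := by rw [abs_mul]; gcongr

theorem integrable_sq_of_abs_le [IsFiniteMeasure μ] (hX : AEMeasurable X μ)
    (hbdd : ∀ᵐ ω ∂μ, |X ω| ≤ M) :
    Integrable (fun ω => X ω ^ 2) μ := by
  refine .of_bound (by fun_prop) (M ^ 2) ?_
  filter_upwards [hbdd] with ω hω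
  rw [norm_eq_abs, abs_pow]
  exact pow_le_pow_left₀ (abs_nonneg _) hω 2

theorem one_le_mgf_of_integral_eq_zero [IsProbabilityMeasure μ] (hX : Integrable X μ)
    (hexp : Integrable (fun ω => exp (l * X ω)) μ) (hmean : ∫ ω, X ω ∂μ = 0) :
    1 ≤ mgf X μ l :=
  calc 1 = ∫ ω, (l * X ω + 1) ∂μ := by
        rw [integral_add (hX.const_mul l) (integrable_const 1), integral_const_mul, hmean]; simp
    _ ≤ mgf X μ l := integral_mono (by fun_prop) hexp fun ω => add_one_le_exp _

theorem mgf_le_exp_mul_integral_sq [IsProbabilityMeasure μ] (hX : AEMeasurable X μ)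
    (hmean : ∫ ω, X ω ∂μ = 0) (hbdd : ∀ᵐ ω ∂μ, |X ω| ≤ M) (hl : 0 ≤ l) (hlM : l * M < 3) :
    mgf X μ l ≤ exp (l ^ 2 / (2 * (1 - l * M / 3)) * ∫ ω, X ω ^ 2 ∂μ) := by
  set c := l ^ 2 / (2 * (1 - l * M / 3))
  have hint : Integrable X μ := .of_bound hX.aestronglyMeasurable M hbdd
  have hint_sq := integrable_sq_of_abs_le hX hbdd
  calc mgf X μ l ≤ ∫ ω, (1 + l * X ω + c * X ω ^ 2) ∂μ :=
        integral_mono_ae (integrable_exp_mul_of_abs_le hX hbdd l) (by fun_prop)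
          (hbdd.mono fun ω hω => exp_mul_le_of_abs_le hl hω hlM)
    _ = c * ∫ ω, X ω ^ 2 ∂μ + 1 := by
        rw [integral_add (by fun_prop) (hint_sq.const_mul c), integral_add (integrable_const 1)
          (hint.const_mul l), integral_const_mul, integral_const_mul, hmean]
        simp; ring
    _ ≤ exp (c * ∫ ω, X ω ^ 2 ∂μ) := add_one_le_exp _

end Moments

section PartialSums

variable {Ω : Type*} {L : ℕ} {X : Fin L → Ω → ℝ}

/-- With `0`-based indices, `partialSum X n` is the paper's `S_n = X_1 + ⋯ + X_n`. -/
def partialSum (X : Fin L → Ω → ℝ) (n : ℕ) (ω : Ω) : ℝ :=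
  ∑ i ∈ univ.filter (fun i : Fin L => (i : ℕ) < n), X i ω

theorem partialSum_succ {n : ℕ} (hn : n < L) (ω : Ω) :
    partialSum X (n + 1) ω = partialSum X n ω + X ⟨n, hn⟩ ω := by
  have : univ.filter (fun i : Fin L => (i : ℕ) < n + 1) =
      insert ⟨n, hn⟩ (univ.filter fun i : Fin L => (i : ℕ) < n) := by
    ext i; simp only [mem_filter, mem_univ, true_and, mem_insert, Fin.ext_iff]; omega
  rw [partialSum, this, sum_insert (by simp), add_comm, partialSum]

theorem partialSum_of_le {n : ℕ} (hn : L ≤ n) (ω : Ω) : partialSum X n ω = ∑ i, X i ω := by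
  rw [partialSum, filter_true_of_mem fun i _ => i.isLt.trans_le hn]

theorem partialSum_neg (n : ℕ) (ω : Ω) :
    partialSum (fun i ω => -X i ω) n ω = -partialSum X n ω :=
  sum_neg_distrib _

end PartialSums

section PrefixFiltration

variable {Ω : Type*} [mΩ : MeasurableSpace Ω] {μ : Measure Ω} {L : ℕ} {X : Fin L → Ω → ℝ}

def prefixFiltration (hX : ∀ i, Measurable (X i)) : Filtration ℕ mΩ where
  seq n := ⨆ k ∈ {k : Fin L | (k : ℕ) < n}, MeasurableSpace.comap (X k) inferInstance
  mono' _ _ hnm := biSup_mono fun _ hk => lt_of_lt_of_le hk hnm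
  le' _ := iSup₂_le fun k _ => (hX k).comap_le

variable (hX : ∀ i, Measurable (X i))

theorem measurable_prefixFiltration {n : ℕ} {k : Fin L} (hk : (k : ℕ) < n) :
    Measurable[prefixFiltration hX n] (X k) :=
  (comap_measurable (X k)).mono (le_iSup₂ (f := fun (k : Fin L) (_ : (k : ℕ) < n) =>
    MeasurableSpace.comap (X k) inferInstance) k hk) le_rfl

theorem measurable_partialSum_prefixFiltration (n : ℕ) :
    Measurable[prefixFiltration hX n] (partialSum X n) :=
  Finset.measurable_sum _ fun _ hk => measurable_prefixFiltration hX (mem_filter.1 hk).2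

theorem indep_comap_prefixFiltration (hindep : iIndepFun X μ) (k : Fin L) :
    Indep (MeasurableSpace.comap (X k) inferInstance) (prefixFiltration hX k) μ := by
  have h := indep_iSup_of_disjoint (fun k => (hX k).comap_le) hindep.iIndep
    (S := {k}) (T := {j : Fin L | (j : ℕ) < k})
    (Set.disjoint_singleton_left.2 (lt_irrefl (k : ℕ)))
  rwa [_root_.iSup_singleton] at h

theorem submartingale_exp_mul_partialSum {l : ℝ} (hindep : iIndepFun X μ)
    (hint : ∀ i, Integrable (fun ω => exp (l * X i ω)) μ) (hmgf : ∀ i, 1 ≤ mgf (X i) μ l) :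
    Submartingale (fun n ω => exp (l * partialSum X n ω)) (prefixFiltration hX) μ := by
  have := hindep.isProbabilityMeasure
  set f : ℕ → Ω → ℝ := fun n ω => exp (l * partialSum X n ω)
  have hadapted : StronglyAdapted (prefixFiltration hX) f := fun n =>
    ((measurable_partialSum_prefixFiltration hX n).const_mul l).exp.stronglyMeasurable
  have hfint (n : ℕ) : Integrable (f n) μ := by
    simpa only [f, partialSum, Finset.sum_apply] using hindep.integrable_exp_mul_sum hX
      (s := univ.filter fun i : Fin L => (i : ℕ) < n) fun i _ => hint i
  refine submartingale_nat hadapted hfint fun n => ?_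
  by_cases hn : n < L
  · set g : Ω → ℝ := fun ω => exp (l * X ⟨n, hn⟩ ω)
    have hfg : f (n + 1) = f n * g := by
      ext ω; simp only [f, g, Pi.mul_apply, partialSum_succ hn, mul_add, exp_add]
    have hg : μ[g | prefixFiltration hX n] =ᵐ[μ] fun _ => mgf (X ⟨n, hn⟩) μ l :=
      condExp_indep_eq (hX _).comap_le ((prefixFiltration hX).le n)
        ((comap_measurable _).const_mul l).exp.stronglyMeasurable
        (indep_comap_prefixFiltration hX hindep ⟨n, hn⟩)
    have hpull :
        μ[f (n + 1) | prefixFiltration hX n] =ᵐ[μ] f n * μ[g | prefixFiltration hX n] := by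
      rw [hfg]
      exact condExp_mul_of_stronglyMeasurable_left (hadapted n) (hfg ▸ hfint (n + 1)) (hint _)
    filter_upwards [hpull, hg] with ω hpull hg
    rw [hpull, Pi.mul_apply, hg]
    exact le_mul_of_one_le_right (exp_nonneg _) (hmgf _)
  · have hLn : L ≤ n := not_lt.1 hn
    have hfn : f (n + 1) = f n := by
      ext ω; simp only [f, partialSum_of_le hLn, partialSum_of_le (Nat.le_succ_of_le hLn)]
    rw [hfn, condExp_of_stronglyMeasurable ((prefixFiltration hX).le n) (hadapted n) (hfint n)]

end PrefixFiltration

section MaximalInequality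

variable {Ω : Type*} [MeasurableSpace Ω] {μ : Measure Ω} {L : ℕ} {X : Fin L → Ω → ℝ}

theorem measure_exists_partialSum_gt_le {l : ℝ} (hX : ∀ i, Measurable (X i))
    (hindep : iIndepFun X μ) (hint : ∀ i, Integrable (fun ω => exp (l * X i ω)) μ)
    (hmgf : ∀ i, 1 ≤ mgf (X i) μ l) (hl : 0 ≤ l) (t : ℝ) :
    μ {ω | ∃ ℓ ≤ L, t < partialSum X ℓ ω} ≤
      ENNReal.ofReal (exp (-(l * t)) * ∏ i, mgf (X i) μ l) := by
  have := hindep.isProbabilityMeasure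
  set f : ℕ → Ω → ℝ := fun n ω => exp (l * partialSum X n ω)
  set ε : NNReal := (exp (l * t)).toNNReal
  have hε : (ε : ℝ) = exp (l * t) := Real.coe_toNNReal _ (exp_nonneg _)
  set A := {ω | (ε : ℝ) ≤ (range (L + 1)).sup' nonempty_range_add_one fun k => f k ω}
  have hsub : {ω | ∃ ℓ ≤ L, t < partialSum X ℓ ω} ⊆ A := by
    rintro ω ⟨ℓ, hℓ, htℓ⟩
    refine le_trans ?_ (le_sup' (fun k => f k ω) (mem_range_succ_iff.2 hℓ))
    rw [hε]
    exact exp_le_exp.2 (mul_le_mul_of_nonneg_left htℓ.le hl)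
  have hfL : ∫ ω, f L ω ∂μ = ∏ i, mgf (X i) μ l := by
    rw [← hindep.mgf_sum hX]
    simp only [f, partialSum_of_le le_rfl, mgf, Finset.sum_apply]
  have hf := submartingale_exp_mul_partialSum hX hindep hint hmgf
  have hdoob : (ε : ENNReal) * μ A ≤ ENNReal.ofReal (∏ i, mgf (X i) μ l) :=
    (maximal_ineq hf (fun _ _ => exp_nonneg _) L).trans <| ENNReal.ofReal_le_ofReal <|
      hfL ▸ setIntegral_le_integral (hf.integrable L) (.of_forall fun _ => exp_nonneg _)
  calc μ {ω | ∃ ℓ ≤ L, t < partialSum X ℓ ω}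
      ≤ ENNReal.ofReal (exp (-(l * t))) * (ε * μ A) := by
        rw [← mul_assoc, ENNReal.ofReal, ← ENNReal.coe_mul, ← Real.toNNReal_mul (exp_nonneg _),
          ← exp_add, neg_add_cancel, exp_zero, Real.toNNReal_one, ENNReal.coe_one, one_mul]
        exact measure_mono hsub
    _ ≤ ENNReal.ofReal (exp (-(l * t)) * ∏ i, mgf (X i) μ l) := by
        rw [ENNReal.ofReal_mul (exp_nonneg _)]
        gcongr

theorem measure_exists_partialSum_gt_eq_zero (hsq : ∀ i, Integrable (fun ω => X i ω ^ 2) μ)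
    (hV : ∑ i, ∫ ω, X i ω ^ 2 ∂μ = 0) {t : ℝ} (ht : 0 ≤ t) :
    μ {ω | ∃ ℓ ≤ L, t < partialSum X ℓ ω} = 0 := by
  have hzero (i : Fin L) : X i =ᵐ[μ] 0 := by
    have hi := (sum_eq_zero_iff_of_nonneg fun j _ => integral_nonneg fun ω => sq_nonneg (X j ω)).1
      hV i (mem_univ i)
    filter_upwards [(integral_eq_zero_iff_of_nonneg (fun ω => sq_nonneg _) (hsq i)).1 hi]
      with ω hω using pow_eq_zero_iff two_ne_zero |>.1 hω
  refine measure_mono_null ?_ (ae_iff.1 (ae_all_iff.2 hzero))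
  rintro ω ⟨ℓ, -, htℓ⟩ hω
  rw [partialSum, sum_eq_zero fun i _ => hω i] at htℓ
  exact ht.not_gt htℓ

theorem bernstein_exponent_eq {V M t : ℝ} (hV : 0 < V) (hD : 0 < V + M * t / 3) :
    (t / (V + M * t / 3)) ^ 2 / (2 * (1 - t / (V + M * t / 3) * M / 3)) * V
      - t / (V + M * t / 3) * t = -(t ^ 2 / 2) / (V + M * t / 3) := by
  set D := V + M * t / 3 with hD_def
  have h1 : 1 - t / D * M / 3 = V / D := by
    field_simp
    linear_combination 3 * hD_def
  rw [h1]
  field_simp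
  ring

theorem measure_exists_partialSum_gt_le_bernstein {M t : ℝ} (hX : ∀ i, Measurable (X i))
    (hindep : iIndepFun X μ) (hmean : ∀ i, ∫ ω, X i ω ∂μ = 0)
    (hbdd : ∀ i, ∀ᵐ ω ∂μ, |X i ω| ≤ M) (ht : 0 < t) :
    μ {ω | ∃ ℓ ≤ L, t < partialSum X ℓ ω} ≤
      ENNReal.ofReal (exp (-(t ^ 2 / 2) / ((∑ i, ∫ ω, X i ω ^ 2 ∂μ) + M * t / 3))) := by
  have := hindep.isProbabilityMeasure
  set V := ∑ i, ∫ ω, X i ω ^ 2 ∂μ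
  have hsq (i : Fin L) := integrable_sq_of_abs_le (hX i).aemeasurable (hbdd i)
  rcases (sum_nonneg fun i _ => integral_nonneg fun ω => sq_nonneg (X i ω) : 0 ≤ V).eq_or_lt
    with hV | hV
  -- For `V = 0` the choice of `l` below violates `l * M < 3`, but then the `X i` vanish a.s.
  · rw [measure_exists_partialSum_gt_eq_zero hsq hV.symm ht.le]
    exact zero_le
  obtain ⟨i₀⟩ : Nonempty (Fin L) := by
    by_contra h
    simp [not_nonempty_iff.1 h] at hV
  have hM : 0 ≤ M := by
    obtain ⟨ω, hω⟩ := (hbdd i₀).exists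
    exact (abs_nonneg _).trans hω
  set D := V + M * t / 3 with hD_def
  have hD : 0 < D := by positivity
  set l := t / D
  have hl : 0 ≤ l := by positivity
  have hlM : l * M < 3 := by
    rw [div_mul_eq_mul_div, div_lt_iff₀ hD]
    linarith
  set c := l ^ 2 / (2 * (1 - l * M / 3))
  have hexponent : c * V - l * t = -(t ^ 2 / 2) / D := bernstein_exponent_eq hV hD
  have hprod : ∏ i, mgf (X i) μ l ≤ exp (c * V) := by
    rw [mul_sum, exp_sum]
    exact prod_le_prod (fun _ _ => mgf_nonneg) fun i _ =>
      mgf_le_exp_mul_integral_sq (hX i).aemeasurable (hmean i) (hbdd i) hl hlM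
  have hint (i : Fin L) := integrable_exp_mul_of_abs_le (hX i).aemeasurable (hbdd i) l
  calc μ {ω | ∃ ℓ ≤ L, t < partialSum X ℓ ω}
      ≤ ENNReal.ofReal (exp (-(l * t)) * ∏ i, mgf (X i) μ l) :=
        measure_exists_partialSum_gt_le hX hindep hint
          (fun i => one_le_mgf_of_integral_eq_zero
            (.of_bound (hX i).aestronglyMeasurable M (hbdd i)) (hint i) (hmean i)) hl t
    _ ≤ ENNReal.ofReal (exp (-(t ^ 2 / 2) / D)) := by
        rw [← hexponent, sub_eq_neg_add, exp_add]
        gcongr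

end MaximalInequality

theorem maximal_bernstein_abs_general
    {Ω : Type*} [MeasurableSpace Ω] (μ : Measure Ω)
    (L : ℕ) (X : Fin L → Ω → ℝ) (M : ℝ)
    (hmeas : ∀ i, Measurable (X i))
    (hindep : iIndepFun X μ)
    (hmean : ∀ i, ∫ ω, X i ω ∂μ = 0)
    (hbdd : ∀ i, ∀ᵐ ω ∂μ, |X i ω| ≤ M)
    (t : ℝ) (ht : 0 < t) :
    μ {ω | ∃ ℓ : ℕ, 1 ≤ ℓ ∧ ℓ ≤ L ∧
        t < |∑ i ∈ Finset.univ.filter (fun i : Fin L => (i : ℕ) < ℓ), X i ω|}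
      ≤ ENNReal.ofReal (2 * Real.exp
          (-(t ^ 2 / 2) / ((∑ i, ∫ ω, (X i ω) ^ 2 ∂μ) + M * t / 3))) := by
  set B := exp (-(t ^ 2 / 2) / ((∑ i, ∫ ω, (X i ω) ^ 2 ∂μ) + M * t / 3))
  have hupper : μ {ω | ∃ ℓ ≤ L, t < partialSum X ℓ ω} ≤ ENNReal.ofReal B :=
    measure_exists_partialSum_gt_le_bernstein hmeas hindep hmean hbdd ht
  have hlower :
      μ {ω | ∃ ℓ ≤ L, t < partialSum (fun i ω => -X i ω) ℓ ω} ≤ ENNReal.ofReal B := by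
    simpa only [neg_sq] using measure_exists_partialSum_gt_le_bernstein
      (X := fun i ω => -X i ω) (fun i => (hmeas i).neg)
      (hindep.comp (fun _ x => -x) fun _ => measurable_neg)
      (fun i => by rw [integral_neg, hmean, neg_zero])
      (fun i => (hbdd i).mono fun ω hω => (abs_neg _).trans_le hω) ht
  have hsub : {ω | ∃ ℓ : ℕ, 1 ≤ ℓ ∧ ℓ ≤ L ∧ t < |partialSum X ℓ ω|} ⊆
      {ω | ∃ ℓ ≤ L, t < partialSum X ℓ ω} ∪
        {ω | ∃ ℓ ≤ L, t < partialSum (fun i ω => -X i ω) ℓ ω} := by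
    rintro ω ⟨ℓ, -, hℓ, htℓ⟩
    rcases lt_abs.1 htℓ with h | h
    · exact .inl ⟨ℓ, hℓ, h⟩
    · exact .inr ⟨ℓ, hℓ, (partialSum_neg ℓ ω).symm ▸ h⟩
  calc _ ≤ _ := (measure_mono hsub).trans (measure_union_le _ _)
    _ ≤ ENNReal.ofReal B + ENNReal.ofReal B := add_le_add hupper hlower
    _ = ENNReal.ofReal (2 * B) := by
        rw [← ENNReal.ofReal_add (exp_nonneg _) (exp_nonneg _), two_mul]

/-- Lemma 2.11 of the paper (a maximal Bernstein/Hoeffding-type inequality): if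
`X_1, ..., X_L` are independent mean-zero random variables with `|X_i| ≤ M`, and
`S_ℓ = X_1 + ⋯ + X_ℓ`, then for every `t > 0`,
`P[max_{1 ≤ ℓ ≤ L} |S_ℓ| > t] ≤ 2 exp(-(t²/2)/(∑ E[X_i²] + Mt/3))`. -/
theorem maximal_bernstein_abs
    {Ω : Type*} [MeasurableSpace Ω] (μ : Measure Ω) [IsProbabilityMeasure μ]
    (L : ℕ) (X : Fin L → Ω → ℝ) (M : ℝ)
    (hmeas : ∀ i, Measurable (X i))
    (hindep : iIndepFun X μ)
    (hint : ∀ i, Integrable (X i) μ)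
    (hmean : ∀ i, ∫ ω, X i ω ∂μ = 0)
    (hbdd : ∀ i, ∀ᵐ ω ∂μ, |X i ω| ≤ M)
    (t : ℝ) (ht : 0 < t) :
    μ {ω | ∃ ℓ : ℕ, 1 ≤ ℓ ∧ ℓ ≤ L ∧
        t < |∑ i ∈ Finset.univ.filter (fun i : Fin L => (i : ℕ) < ℓ), X i ω|}
      ≤ ENNReal.ofReal (2 * Real.exp
          (-(t ^ 2 / 2) / ((∑ i, ∫ ω, (X i ω) ^ 2 ∂μ) + M * t / 3))) :=
  maximal_bernstein_abs_general μ L X M hmeas hindep hmean hbdd t ht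
end

section
/- Let X_1, X_2, ... be independent, identically distributed real random variables with E[X_i] = 0, Var[X_i] = 1, and |X_i| ≤ M. Fix 0 < α < 1/2, 0 < ε_3 < 1, an integer s > 1, constants c > 0 and 0 < γ < 1, and suppose that for all sufficiently large k and every integer j ≥ 0, the event A_j^{(k)} := {sup_{1 ≤ i_1 ≤ i_2 ≤ s^{k(1−α)}} ((S_{i_1+j} − S_j)² + (S_{i_2+j} − S_{i_1+j})²)/i_2 < 2(1−ε_3) ln ln s^k} has probability at most exp(−c·k^{1−γ}). Let C be a power of s and let L be the interval family consisting, for each i ∈ {0,...,C−1} and each sufficiently large k, of the interval (1+s+...+s^{k−1} + i·s^{k+1}/C, 1+s+...+s^k + i·s^{k+1}/C] of length s^k. For I ∈ L of length s^k, let P_I := {j ∈ I : A_j^{(k)} occurs} and let E_I be the event that |P_I| > ε_3·s^k. Then almost surely only finitely many of the events E_I (for I ∈ L) occur. -/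
open MeasureTheory ProbabilityTheory Filter
open scoped Classical

/-!
Markov's inequality applied to the number of bad indices in an interval `I` of length `s^k`
gives `P(E_I) ≤ s^k · exp(-c k^(1-γ)) / (ε₃ s^k) = exp(-c k^(1-γ)) / ε₃`. For each of the
finitely many shifts `i < C` these bounds are summable in `k`, so the first Borel–Cantelli
lemma leaves almost surely only finitely many `E_I`.
-/

/-- The event `A_j^(k)`: with `S_ℓ = X_1 + ⋯ + X_ℓ` (and `S_0 = 0`),
`sup_{1 ≤ i₁ ≤ i₂ ≤ (s^k)^(1-α)} ((S_{i₁+j}-S_j)² + (S_{i₂+j}-S_{i₁+j})²)/i₂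
  < 2(1-ε₃) ln ln s^k`. -/
def badEvent {Ω : Type*} (X : ℕ → Ω → ℝ) (α ε₃ : ℝ) (s k j : ℕ) : Set Ω :=
  {ω | ∀ i₁ i₂ : ℕ, 1 ≤ i₁ → i₁ ≤ i₂ →
    (i₂ : ℝ) ≤ ((s : ℝ) ^ k) ^ ((1 : ℝ) - α) →
    ((∑ i ∈ Finset.range (i₁ + j), X i ω - ∑ i ∈ Finset.range j, X i ω) ^ 2 +
      (∑ i ∈ Finset.range (i₂ + j), X i ω - ∑ i ∈ Finset.range (i₁ + j), X i ω) ^ 2) /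
        (i₂ : ℝ)
      < 2 * (1 - ε₃) * Real.log (Real.log ((s : ℝ) ^ k))}


open scoped ENNReal

theorem Real.summable_exp_neg_mul_rpow_nat {c p : ℝ} (hc : 0 < c) (hp : 0 < p) :
    Summable fun k : ℕ => Real.exp (-c * (k : ℝ) ^ p) := by
  have hpow : Tendsto (fun k : ℕ => (k : ℝ) ^ p) atTop atTop :=
    (tendsto_rpow_atTop hp).comp tendsto_natCast_atTop_atTop
  -- `exp (-c x) = o(x ^ (-2 / p))`, evaluated at `x = k ^ p`, beats `k ^ (-2)`.
  refine summable_of_isBigO_nat (Real.summable_nat_rpow.mpr (by norm_num : (-2 : ℝ) < -1)) ?_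
  refine ((isLittleO_exp_neg_mul_rpow_atTop hc (-2 / p)).comp_tendsto hpow).isBigO.congr_right
    fun k => ?_
  rw [Function.comp_apply, ← Real.rpow_mul k.cast_nonneg, mul_div_cancel₀ _ hp.ne']

section

variable {Ω : Type*} [MeasurableSpace Ω] {μ : Measure Ω}

theorem measure_mul_card_lt_card_filter_le {ι : Type*} (I : Finset ι) (B : ι → Set Ω)
    {δ : ℝ≥0∞} (hB : ∀ j ∈ I, μ (B j) ≤ δ) {ε : ℝ} (hε : 0 < ε) :
    μ {ω | ε * I.card < ((I.filter fun j => ω ∈ B j).card : ℝ)} ≤ δ / ENNReal.ofReal ε := by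
  rcases I.eq_empty_or_nonempty with rfl | hI
  · simp
  -- Passing to measurable hulls makes Markov's inequality applicable to arbitrary `B j`.
  set f : Ω → ℝ≥0∞ := fun ω => ∑ j ∈ I, (toMeasurable μ (B j)).indicator 1 ω
  have hf : Measurable f :=
    Finset.measurable_sum _ fun j _ => measurable_one.indicator (measurableSet_toMeasurable μ _)
  have hn : (I.card : ℝ≥0∞) ≠ 0 := by simpa using hI.ne_empty
  have hsub : {ω | ε * I.card < ((I.filter fun j => ω ∈ B j).card : ℝ)} ⊆
      {ω | ENNReal.ofReal ε * I.card ≤ f ω} := by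
    intro ω hω
    calc ENNReal.ofReal ε * I.card ≤ ((I.filter fun j => ω ∈ B j).card : ℝ≥0∞) := by
          rw [← ENNReal.ofReal_natCast, ← ENNReal.ofReal_natCast, ← ENNReal.ofReal_mul hε.le]
          exact ENNReal.ofReal_le_ofReal hω.le
      _ = ∑ j ∈ I, (B j).indicator 1 ω := by
          rw [Finset.card_filter]; push_cast; simp [Set.indicator_apply]
      _ ≤ f ω := Finset.sum_le_sum fun j _ =>
          Set.indicator_le_indicator_of_subset (subset_toMeasurable μ _) (by simp) ω
  have hintegral : ∫⁻ ω, f ω ∂μ ≤ δ * I.card := by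
    rw [lintegral_finsetSum _ fun j _ =>
      measurable_one.indicator (measurableSet_toMeasurable μ _)]
    simp_rw [lintegral_indicator_one (measurableSet_toMeasurable μ _), measure_toMeasurable]
    exact (Finset.sum_le_sum hB).trans_eq (by rw [Finset.sum_const, nsmul_eq_mul, mul_comm])
  calc μ {ω | ε * I.card < ((I.filter fun j => ω ∈ B j).card : ℝ)}
      ≤ (∫⁻ ω, f ω ∂μ) / (ENNReal.ofReal ε * I.card) :=
        (measure_mono hsub).trans (meas_ge_le_lintegral_div hf.aemeasurable
          (mul_ne_zero (by simpa using hε) hn) (ENNReal.mul_ne_top ENNReal.ofReal_ne_top (by simp)))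
    _ ≤ δ * I.card / (ENNReal.ofReal ε * I.card) := by gcongr
    _ = δ / ENNReal.ofReal ε := ENNReal.mul_div_mul_right _ _ hn (by simp)

theorem ae_finite_setOf_mem_of_le_of_tsum_ne_top {E : ℕ → Set Ω} {u : ℕ → ℝ≥0∞}
    (hu : ∑' k, u k ≠ ∞) {k₀ : ℕ} (hE : ∀ k, k₀ ≤ k → μ (E k) ≤ u k) :
    ∀ᵐ ω ∂μ, {k | ω ∈ E k}.Finite := by
  have hsum : ∑' k, μ {ω | k₀ ≤ k ∧ ω ∈ E k} ≠ ∞ := by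
    refine ne_top_of_le_ne_top hu (ENNReal.tsum_le_tsum fun k => ?_)
    by_cases hk : k₀ ≤ k
    · exact (measure_mono fun ω hω => hω.2).trans (hE k hk)
    · simp [hk]
  filter_upwards [ae_finite_setOfPred_mem hsum] with ω hω
  refine ((Set.finite_Iio k₀).union hω).subset fun k hk => ?_
  by_cases hk₀ : k₀ ≤ k
  · exact Or.inr ⟨hk₀, hk⟩
  · exact Or.inl (not_le.mp hk₀)

theorem ae_finite_setOf_fst_lt_of_le_of_tsum_ne_top {E : ℕ × ℕ → Set Ω} {u : ℕ → ℝ≥0∞}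
    (hu : ∑' k, u k ≠ ∞) {C k₀ : ℕ} (hE : ∀ i < C, ∀ k, k₀ ≤ k → μ (E (i, k)) ≤ u k) :
    ∀ᵐ ω ∂μ, {p : ℕ × ℕ | p.1 < C ∧ ω ∈ E p}.Finite := by
  have hrows : ∀ᵐ ω ∂μ, ∀ i ∈ Set.Iio C, {k | ω ∈ E (i, k)}.Finite :=
    (eventually_all_finite (Set.finite_Iio C)).2 fun i hi =>
      ae_finite_setOf_mem_of_le_of_tsum_ne_top hu (hE i hi)
  filter_upwards [hrows] with ω hω
  refine ((Set.finite_Iio C).biUnion fun i hi => (hω i hi).image (Prod.mk i)).subset ?_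
  rintro ⟨i, k⟩ ⟨hi, hk⟩
  exact Set.mem_biUnion hi ⟨k, hk, rfl⟩

end

theorem borel_cantelli_bad_events_general
    {Ω : Type*} [MeasurableSpace Ω] (μ : Measure Ω)
    (X : ℕ → Ω → ℝ)
    (α ε₃ : ℝ) (hε₃0 : 0 < ε₃)
    (s : ℕ) (c γ : ℝ) (hc : 0 < c) (hγ : γ < 1)
    (hA : ∃ k₀ : ℕ, ∀ k : ℕ, k₀ ≤ k → ∀ j : ℕ,
      μ (badEvent X α ε₃ s k j) ≤ ENNReal.ofReal (Real.exp (-c * (k : ℝ) ^ ((1 : ℝ) - γ))))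
    (C : ℕ) :
    ∀ᵐ ω ∂μ, {p : ℕ × ℕ |
      p.1 < C ∧ C ∣ s ^ (p.2 + 1) ∧
      ε₃ * ((s : ℝ) ^ p.2) <
        (((Finset.Ioc ((∑ m ∈ Finset.range p.2, s ^ m) + p.1 * s ^ (p.2 + 1) / C)
              ((∑ m ∈ Finset.range (p.2 + 1), s ^ m) + p.1 * s ^ (p.2 + 1) / C)).filter
            (fun j => ω ∈ badEvent X α ε₃ s p.2 j)).card : ℝ)}.Finite := by
  obtain ⟨k₀, hk₀⟩ := hA
  have hcard : ∀ k a : ℕ, ((Finset.Ioc ((∑ m ∈ Finset.range k, s ^ m) + a)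
      ((∑ m ∈ Finset.range (k + 1), s ^ m) + a)).card : ℝ) = (s : ℝ) ^ k := by
    intro k a
    rw [Nat.card_Ioc, Finset.sum_range_succ, add_right_comm, Nat.add_sub_cancel_left]
    push_cast
    rfl
  have hsum : ∑' k : ℕ, ENNReal.ofReal (Real.exp (-c * (k : ℝ) ^ ((1 : ℝ) - γ))) /
      ENNReal.ofReal ε₃ ≠ ∞ := by
    simp_rw [div_eq_mul_inv]
    rw [ENNReal.tsum_mul_right, ← ENNReal.ofReal_tsum_of_nonneg (fun k => (Real.exp_pos _).le)
      (Real.summable_exp_neg_mul_rpow_nat hc (by linarith))]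
    exact ENNReal.mul_ne_top ENNReal.ofReal_ne_top (ENNReal.inv_ne_top.2 (by simpa using hε₃0))
  let E : ℕ × ℕ → Set Ω := fun p => {ω | ε₃ * ((s : ℝ) ^ p.2) <
      (((Finset.Ioc ((∑ m ∈ Finset.range p.2, s ^ m) + p.1 * s ^ (p.2 + 1) / C)
            ((∑ m ∈ Finset.range (p.2 + 1), s ^ m) + p.1 * s ^ (p.2 + 1) / C)).filter
          (fun j => ω ∈ badEvent X α ε₃ s p.2 j)).card : ℝ)}
  have hE : ∀ i < C, ∀ k, k₀ ≤ k → μ (E (i, k)) ≤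
      ENNReal.ofReal (Real.exp (-c * (k : ℝ) ^ ((1 : ℝ) - γ))) / ENNReal.ofReal ε₃ := by
    intro i _ k hk
    simp_rw [E, ← hcard k (i * s ^ (k + 1) / C)]
    exact measure_mul_card_lt_card_filter_le _ _ (fun j _ => hk₀ k hk j) hε₃0
  filter_upwards [ae_finite_setOf_fst_lt_of_le_of_tsum_ne_top hsum hE] with ω hω
  exact hω.subset fun p hp => ⟨hp.1, hp.2.2⟩

/-- Lemma 3.3 of the paper: suppose the events `A_j^(k)` have probability at most
`exp(-c k^(1-γ))` for all large `k`.  Let `C` be a power of `s` and let `L` be the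
family consisting, for each `i ∈ {0, ..., C-1}` and each (sufficiently large) `k`, of
the interval `I = (1 + s + ⋯ + s^(k-1) + i s^(k+1)/C, 1 + s + ⋯ + s^k + i s^(k+1)/C]`
of length `s^k`.  With `P_I = {j ∈ I : A_j^(k) occurs}` and `E_I` the event
`|P_I| > ε₃ s^k`, almost surely only finitely many of the events `E_I` occur. -/
theorem borel_cantelli_bad_events
    {Ω : Type*} [MeasurableSpace Ω] (μ : Measure Ω) [IsProbabilityMeasure μ]
    (X : ℕ → Ω → ℝ) (M : ℝ)
    (hmeas : ∀ i, Measurable (X i))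
    (hindep : iIndepFun X μ)
    (hident : ∀ i, IdentDistrib (X i) (X 0) μ μ)
    (hint : ∀ i, Integrable (X i) μ)
    (hmean : ∀ i, ∫ ω, X i ω ∂μ = 0)
    (hvar : ∀ i, variance (X i) μ = 1)
    (hbdd : ∀ i, ∀ᵐ ω ∂μ, |X i ω| ≤ M)
    (α ε₃ : ℝ) (hα0 : 0 < α) (hα : α < 1 / 2) (hε₃0 : 0 < ε₃) (hε₃ : ε₃ < 1)
    (s : ℕ) (hs : 1 < s) (c γ : ℝ) (hc : 0 < c) (hγ0 : 0 < γ) (hγ : γ < 1)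
    (hA : ∃ k₀ : ℕ, ∀ k : ℕ, k₀ ≤ k → ∀ j : ℕ,
      μ (badEvent X α ε₃ s k j) ≤ ENNReal.ofReal (Real.exp (-c * (k : ℝ) ^ ((1 : ℝ) - γ))))
    (C : ℕ) (hC : ∃ e : ℕ, C = s ^ e) :
    ∀ᵐ ω ∂μ, {p : ℕ × ℕ |
      p.1 < C ∧ C ∣ s ^ (p.2 + 1) ∧
      ε₃ * ((s : ℝ) ^ p.2) <
        (((Finset.Ioc ((∑ m ∈ Finset.range p.2, s ^ m) + p.1 * s ^ (p.2 + 1) / C)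
              ((∑ m ∈ Finset.range (p.2 + 1), s ^ m) + p.1 * s ^ (p.2 + 1) / C)).filter
            (fun j => ω ∈ badEvent X α ε₃ s p.2 j)).card : ℝ)}.Finite :=
  borel_cantelli_bad_events_general μ X α ε₃ hε₃0 s c γ hc hγ hA C
end
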